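/- Let K = (K^1,…,K^n) be smooth functions on ℝⁿ and suppose there exist smooth functions G^β_γ on ℝⁿ (β,γ = 1,…,n) such that ∂_α G^β_γ = ∂_α∂_ρ K^β ∂_γ K^ρ for all α,β,γ at every point. Then K satisfies the oriented associativity equations (AE). -/

import Mathlib

/-- Partial derivative of `f` in the `i`-th coordinate direction on `ℝⁿ`. -/
noncomputable def pd {n : ℕ} (i : Fin n) (f : (Fin n → ℝ) → ℝ) : (Fin n → ℝ) → ℝ :=
  fun x => fderiv ℝ f x (Pi.single i 1)

section helpers
variable {n : ℕ}

lemma contDiff_pd {f : (Fin n → ℝ) → ℝ} (i : Fin n) (hf : ContDiff ℝ (⊤ : ℕ∞) f) :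
    ContDiff ℝ (⊤ : ℕ∞) (pd i f) :=
  (hf.fderiv_right (le_refl _)).clm_apply contDiff_const

lemma pd_pd_eq {f : (Fin n → ℝ) → ℝ} (i j : Fin n) (hf : ContDiff ℝ (⊤ : ℕ∞) f)
    (x : Fin n → ℝ) :
    pd i (pd j f) x = fderiv ℝ (fderiv ℝ f) x (Pi.single i 1) (Pi.single j 1) := by
  have hd : DifferentiableAt ℝ (fderiv ℝ f) x :=
    ((hf.fderiv_right (m := 1) (WithTop.coe_le_coe.mpr le_top)).differentiable one_ne_zero) x
  unfold pd
  rw [fderiv_clm_apply hd (differentiableAt_const _)]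
  simp

lemma pd_comm {f : (Fin n → ℝ) → ℝ} (i j : Fin n) (hf : ContDiff ℝ (⊤ : ℕ∞) f)
    (x : Fin n → ℝ) :
    pd i (pd j f) x = pd j (pd i f) x := by
  rw [pd_pd_eq i j hf, pd_pd_eq j i hf]
  exact (hf.contDiffAt.isSymmSndFDerivAt (by rw [minSmoothness_of_isRCLikeNormedField]; exact WithTop.coe_le_coe.mpr le_top)) _ _

lemma pd_congr {f g : (Fin n → ℝ) → ℝ} (i : Fin n) (h : ∀ x, f x = g x)
    (x : Fin n → ℝ) : pd i f x = pd i g x := by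
  have : f = g := funext h
  rw [this]

lemma pd_sum {ι : Type*} (s : Finset ι) {F : ι → (Fin n → ℝ) → ℝ} (i : Fin n) (x : Fin n → ℝ)
    (hF : ∀ ρ ∈ s, DifferentiableAt ℝ (F ρ) x) :
    pd i (fun y => ∑ ρ ∈ s, F ρ y) x = ∑ ρ ∈ s, pd i (F ρ) x := by
  unfold pd
  rw [fderiv_fun_sum hF]
  simp

lemma pd_mul {f g : (Fin n → ℝ) → ℝ} (i : Fin n) (x : Fin n → ℝ)
    (hf : DifferentiableAt ℝ f x) (hg : DifferentiableAt ℝ g x) :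
    pd i (fun y => f y * g y) x = pd i f x * g x + f x * pd i g x := by
  unfold pd
  rw [fderiv_fun_mul hf hg]
  simp [mul_comm]
  ring

end helpers

/-- intermediate integral: if there exist `G^β_γ` with
`∂_α G^β_γ = ∂_α∂_ρ K^β ∂_γ K^ρ`, then `K` satisfies the oriented associativity
equations. -/
theorem intermediate_integral_first_order
    {n : ℕ} (hn : 1 ≤ n)
    (K : Fin n → (Fin n → ℝ) → ℝ)
    (G : Fin n → Fin n → (Fin n → ℝ) → ℝ)
    (hK : ∀ α, ContDiff ℝ (⊤ : ℕ∞) (K α))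
    (hG : ∀ β γ, ContDiff ℝ (⊤ : ℕ∞) (G β γ))
    (hGi : ∀ α β γ, ∀ x : Fin n → ℝ,
      pd α (G β γ) x = ∑ ρ, pd α (pd ρ (K β)) x * pd γ (K ρ) x) :
    ∀ α β γ ν, ∀ x : Fin n → ℝ,
      ∑ ρ, pd α (pd ρ (K ν)) x * pd β (pd γ (K ρ)) x
        = ∑ ρ, pd α (pd β (K ρ)) x * pd ρ (pd γ (K ν)) x := by
  -- differentiability facts
  have hK1 : ∀ ρ i, ContDiff ℝ (⊤ : ℕ∞) (pd i (K ρ)) := fun ρ i => contDiff_pd i (hK ρ)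
  have hK2 : ∀ ρ i j, ContDiff ℝ (⊤ : ℕ∞) (pd i (pd j (K ρ))) :=
    fun ρ i j => contDiff_pd i (contDiff_pd j (hK ρ))
  -- expansion of ∂β ∂α G^ν_γ
  have hexp : ∀ α β γ ν (x : Fin n → ℝ),
      pd β (pd α (G ν γ)) x
        = ∑ ρ, (pd β (pd α (pd ρ (K ν))) x * pd γ (K ρ) x
            + pd α (pd ρ (K ν)) x * pd β (pd γ (K ρ)) x) := by
    intro α β γ ν x
    rw [pd_congr β (hGi α ν γ) x]
    rw [pd_sum Finset.univ β x (fun ρ _ =>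
      (((hK2 ν α ρ).mul (hK1 ρ γ)).differentiable (by simp)) x)]
    refine Finset.sum_congr rfl fun ρ _ => ?_
    exact pd_mul β x (((hK2 ν α ρ).differentiable (by simp)) x)
      (((hK1 ρ γ).differentiable (by simp)) x)
  -- key symmetry: S(α,β,γ) = S(β,α,γ)
  have key : ∀ α β γ ν (x : Fin n → ℝ),
      ∑ ρ, pd α (pd ρ (K ν)) x * pd β (pd γ (K ρ)) x
        = ∑ ρ, pd β (pd ρ (K ν)) x * pd α (pd γ (K ρ)) x := by
    intro α β γ ν x
    have h1 := hexp α β γ ν x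
    have h2 := hexp β α γ ν x
    rw [pd_comm β α (hG ν γ) x] at h1
    rw [h2] at h1
    have h3 : ∀ ρ : Fin n,
        pd β (pd α (pd ρ (K ν))) x = pd α (pd β (pd ρ (K ν))) x :=
      fun ρ => pd_comm β α (contDiff_pd ρ (hK ν)) x
    have h4 := h1
    simp only [h3] at h4
    have h5 : ∑ ρ, pd α (pd ρ (K ν)) x * pd β (pd γ (K ρ)) x
        = ∑ ρ, pd β (pd ρ (K ν)) x * pd α (pd γ (K ρ)) x := by
      have := congrArg (fun t => t - ∑ ρ, pd α (pd β (pd ρ (K ν))) x * pd γ (K ρ) x) h4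
      simp only [Finset.sum_add_distrib] at h4
      linarith
    exact h5
  -- swap last two arguments of S
  have swap23 : ∀ α β γ ν (x : Fin n → ℝ),
      ∑ ρ, pd α (pd ρ (K ν)) x * pd β (pd γ (K ρ)) x
        = ∑ ρ, pd α (pd ρ (K ν)) x * pd γ (pd β (K ρ)) x := by
    intro α β γ ν x
    refine Finset.sum_congr rfl fun ρ _ => ?_
    rw [pd_comm β γ (hK ρ) x]
  intro α β γ ν x
  have hRHS : ∑ ρ, pd α (pd β (K ρ)) x * pd ρ (pd γ (K ν)) x
      = ∑ ρ, pd γ (pd ρ (K ν)) x * pd α (pd β (K ρ)) x := by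
    refine Finset.sum_congr rfl fun ρ _ => ?_
    rw [pd_comm ρ γ (hK ν) x, mul_comm]
  rw [hRHS]
  calc ∑ ρ, pd α (pd ρ (K ν)) x * pd β (pd γ (K ρ)) x
      = ∑ ρ, pd β (pd ρ (K ν)) x * pd α (pd γ (K ρ)) x := key α β γ ν x
    _ = ∑ ρ, pd β (pd ρ (K ν)) x * pd γ (pd α (K ρ)) x := swap23 β α γ ν x
    _ = ∑ ρ, pd γ (pd ρ (K ν)) x * pd β (pd α (K ρ)) x := key β γ α ν x
    _ = ∑ ρ, pd γ (pd ρ (K ν)) x * pd α (pd β (K ρ)) x := swap23 γ β α ν x
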